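/- arXiv:2111.03101 — 8 statements merged into one kernel-verified Lean document; each statement's English description precedes it below -/
import Mathlib

section
/- Let a,b,e be real numbers and define X(x,y,z) = (ax+by+xz, -bx+ay+yz, ez - x^2 - y^2 - z^2) and Δ(x,y,z) = (x(a+z), y(a+z), ez - x^2 - y^2 - z^2). Then for all (x,y,z) ∈ ℝ³, the vector identity (DΔ)(x,y,z) · X(x,y,z) - (DX)(x,y,z) · Δ(x,y,z) = 0 holds, where DΔ and DX denote the Jacobian matrices. -/
/-!
The field `X` is `Δ + b • J`, where `J (x, y, z) = (y, -x, 0)` generates the rotations about the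
`z`-axis. Since `Δ` is rotationally symmetric, `DΔ · J = J · Δ`, i.e. `[J, Δ] = 0`; together with
`[Δ, Δ] = 0` this gives `[X, Δ] = 0`.
-/

open ContinuousLinearMap VectorField

theorem VectorField.lieBracket_continuousLinearMap_left {𝕜 E : Type*} [NontriviallyNormedField 𝕜]
    [NormedAddCommGroup E] [NormedSpace 𝕜 E] (L : E →L[𝕜] E) (W : E → E) (x : E) :
    lieBracket 𝕜 L W x = fderiv 𝕜 W x (L x) - L (W x) := by
  rw [lieBracket, L.fderiv]

def langfordDelta (a e : ℝ) (p : ℝ × ℝ × ℝ) : ℝ × ℝ × ℝ :=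
  (p.1 * (a + p.2.2), p.2.1 * (a + p.2.2), e * p.2.2 - p.1 ^ 2 - p.2.1 ^ 2 - p.2.2 ^ 2)

def rotationZ : (ℝ × ℝ × ℝ) →L[ℝ] ℝ × ℝ × ℝ :=
  ((fst ℝ ℝ ℝ).comp (snd ℝ ℝ (ℝ × ℝ))).prod ((-fst ℝ ℝ (ℝ × ℝ)).prod 0)

@[simp]
theorem rotationZ_apply (p : ℝ × ℝ × ℝ) : rotationZ p = (p.2.1, -p.1, 0) := rfl

theorem differentiable_langfordDelta (a e : ℝ) : Differentiable ℝ (langfordDelta a e) := by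
  unfold langfordDelta
  fun_prop

theorem fderiv_langfordDelta_apply (a e : ℝ) (p v : ℝ × ℝ × ℝ) :
    fderiv ℝ (langfordDelta a e) p v =
      ((a + p.2.2) * v.1 + p.1 * v.2.2, (a + p.2.2) * v.2.1 + p.2.1 * v.2.2,
        -2 * p.1 * v.1 - 2 * p.2.1 * v.2.1 + (e - 2 * p.2.2) * v.2.2) := by
  unfold langfordDelta
  simp (disch := fun_prop) only [DifferentiableAt.fderiv_prodMk, fderiv_fun_mul, fderiv_const_add,
    fderiv.snd, fderiv_fun_id, comp_id, fderiv.fst, fderiv_fun_sub, fderiv_fun_const, Pi.zero_apply,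
    smul_zero, add_zero, fderiv_fun_pow, Nat.add_one_sub_one, pow_one, nsmul_eq_mul, Nat.cast_ofNat,
    prod_apply, add_apply, smul_apply, comp_apply, coe_snd', smul_eq_mul, coe_fst', sub_apply,
    neg_mul, Prod.mk.injEq]
  refine ⟨?_, ?_, ?_⟩ <;> ring

theorem fderiv_langfordDelta_rotationZ (a e : ℝ) (p : ℝ × ℝ × ℝ) :
    fderiv ℝ (langfordDelta a e) p (rotationZ p) = rotationZ (langfordDelta a e p) := by
  simp only [fderiv_langfordDelta_apply, rotationZ_apply, langfordDelta, Prod.mk.injEq]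
  refine ⟨?_, ?_, ?_⟩ <;> ring

theorem stmt0 (a b e : ℝ)
    (X Δ : ℝ × ℝ × ℝ → ℝ × ℝ × ℝ)
    (hX : X = fun p => (a*p.1 + b*p.2.1 + p.1*p.2.2,
                        -b*p.1 + a*p.2.1 + p.2.1*p.2.2,
                        e*p.2.2 - p.1^2 - p.2.1^2 - p.2.2^2))
    (hΔ : Δ = fun p => (p.1*(a + p.2.2), p.2.1*(a + p.2.2),
                        e*p.2.2 - p.1^2 - p.2.1^2 - p.2.2^2)) :
    ∀ p : ℝ × ℝ × ℝ, fderiv ℝ Δ p (X p) - fderiv ℝ X p (Δ p) = 0 := by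
  have hΔ : Δ = langfordDelta a e := hΔ
  have hX : X = langfordDelta a e + b • ⇑rotationZ := by
    rw [hX]
    funext p
    simp only [langfordDelta, Pi.add_apply, Pi.smul_apply, rotationZ_apply, Prod.smul_mk,
      Prod.mk_add_mk, smul_eq_mul, Prod.mk.injEq]
    refine ⟨?_, ?_, ?_⟩ <;> ring
  intro p
  change lieBracket ℝ X Δ p = 0
  have hδ := differentiable_langfordDelta a e p
  rw [hX, hΔ, lieBracket_add_left hδ (rotationZ.differentiableAt.const_smul b), lieBracket_self,
    lieBracket_const_smul_left rotationZ.differentiableAt, lieBracket_continuousLinearMap_left,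
    fderiv_langfordDelta_rotationZ, sub_self, smul_zero, Pi.zero_apply, zero_add]
end

section
/- Let a,b be real numbers and define X(x,y,z) = (ax+by+xz, -bx+ay+yz, -2az - x^2 - y^2 - z^2) and Δ(x,y,z) = (y, -x, 0). Then for all (x,y,z) ∈ ℝ³, (DΔ)(x,y,z) · X(x,y,z) - (DX)(x,y,z) · Δ(x,y,z) = 0. -/
/-!
The field `X` is equivariant under the rotations about the `z`-axis, whose infinitesimal
generator is the linear field `Δ`. Since `Δ` is linear, `[X, Δ](p) = Δ (X p) - DX(p) (Δ p)`, and
the infinitesimal form of that equivariance, `DX(p) (Δ p) = Δ (X p)`, is a direct computation.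
-/

open ContinuousLinearMap VectorField

theorem lieBracket_continuousLinearMap_right {𝕜 E : Type*} [NontriviallyNormedField 𝕜]
    [NormedAddCommGroup E] [NormedSpace 𝕜 E] (V : E → E) (L : E →L[𝕜] E) (x : E) :
    lieBracket 𝕜 V L x = L (V x) - fderiv 𝕜 V x (L x) := by
  rw [lieBracket, L.fderiv]

def langfordField (a b : ℝ) (p : ℝ × ℝ × ℝ) : ℝ × ℝ × ℝ :=
  (a*p.1 + b*p.2.1 + p.1*p.2.2, -b*p.1 + a*p.2.1 + p.2.1*p.2.2,
    -2*a*p.2.2 - p.1^2 - p.2.1^2 - p.2.2^2)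

def rotationGenerator : (ℝ × ℝ × ℝ) →L[ℝ] ℝ × ℝ × ℝ :=
  (fst ℝ ℝ ℝ ∘L snd ℝ ℝ (ℝ × ℝ)).prod ((-fst ℝ ℝ (ℝ × ℝ)).prod 0)

@[simp]
theorem rotationGenerator_apply (p : ℝ × ℝ × ℝ) : rotationGenerator p = (p.2.1, -p.1, 0) := rfl

theorem fderiv_langfordField_apply (a b : ℝ) (p v : ℝ × ℝ × ℝ) :
    fderiv ℝ (langfordField a b) p v =
      (a*v.1 + b*v.2.1 + v.1*p.2.2 + p.1*v.2.2, -b*v.1 + a*v.2.1 + v.2.1*p.2.2 + p.2.1*v.2.2,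
        -2*a*v.2.2 - 2*p.1*v.1 - 2*p.2.1*v.2.1 - 2*p.2.2*v.2.2) := by
  unfold langfordField
  rw [DifferentiableAt.fderiv_prodMk (by fun_prop) (by fun_prop),
    DifferentiableAt.fderiv_prodMk (by fun_prop) (by fun_prop)]
  ext <;> simp (disch := fun_prop) [fderiv_fun_add, fderiv_fun_sub, fderiv_fun_mul,
    fderiv_fun_pow, fderiv_fun_neg, fderiv.fst, fderiv.snd] <;> ring

theorem fderiv_langfordField_rotationGenerator (a b : ℝ) (p : ℝ × ℝ × ℝ) :
    fderiv ℝ (langfordField a b) p (rotationGenerator p) =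
      rotationGenerator (langfordField a b p) := by
  rw [fderiv_langfordField_apply]
  ext <;> simp [langfordField] <;> ring

theorem lieBracket_langfordField_rotationGenerator (a b : ℝ) (p : ℝ × ℝ × ℝ) :
    lieBracket ℝ (langfordField a b) rotationGenerator p = 0 := by
  rw [lieBracket_continuousLinearMap_right, fderiv_langfordField_rotationGenerator, sub_self]

theorem stmt1 (a b : ℝ)
    (X Δ : ℝ × ℝ × ℝ → ℝ × ℝ × ℝ)
    (hX : X = fun p => (a*p.1 + b*p.2.1 + p.1*p.2.2,
                        -b*p.1 + a*p.2.1 + p.2.1*p.2.2,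
                        -2*a*p.2.2 - p.1^2 - p.2.1^2 - p.2.2^2))
    (hΔ : Δ = fun p => (p.2.1, -p.1, 0)) :
    ∀ p : ℝ × ℝ × ℝ, fderiv ℝ Δ p (X p) - fderiv ℝ X p (Δ p) = 0 := by
  subst hX hΔ
  show ∀ p, lieBracket ℝ (langfordField a b) rotationGenerator p = 0
  exact lieBracket_langfordField_rotationGenerator a b
end

section
/- Let a,b be real numbers and define X(x,y,z) = (ax+by+xz, -bx+ay+yz, -2az - x^2 - y^2 - z^2) and Δ(x,y,z) = (-y(x²+y²)(4az + x² + y² + 2z²), x(x²+y²)(4az + x² + y² + 2z²), 0). Then for all (x,y,z) ∈ ℝ³, (DΔ)(x,y,z) · X(x,y,z) - (DX)(x,y,z) · Δ(x,y,z) = 0. -/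
/-!
Write `ρ = x² + y²` and `G = 4az + x² + y² + 2z²`, so that `Δ = (ρ G) • R` with `R = (-y, x, 0)`
the generator of rotations about the `z`-axis. Since `c = -b` and `d = a`, the field `X` is
invariant under these rotations, i.e. `[X, R] = 0`. Moreover `ρ` and `G` are Darboux polynomials
of `X` with opposite cofactors `±2(a + z)`, so `ρ G` is a first integral of `X`. The product rule
`[X, f • R] = X(f) • R + f • [X, R]` then gives `[X, Δ] = 0`.
-/

open VectorField

namespace Langford

variable (a b : ℝ) (p : ℝ × ℝ × ℝ)

def field (q : ℝ × ℝ × ℝ) : ℝ × ℝ × ℝ :=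
  (a * q.1 + b * q.2.1 + q.1 * q.2.2,
   -b * q.1 + a * q.2.1 + q.2.1 * q.2.2,
   -2 * a * q.2.2 - q.1 ^ 2 - q.2.1 ^ 2 - q.2.2 ^ 2)

def axialRotation (q : ℝ × ℝ × ℝ) : ℝ × ℝ × ℝ := (-q.2.1, q.1, 0)

def radiusSq (q : ℝ × ℝ × ℝ) : ℝ := q.1 ^ 2 + q.2.1 ^ 2

def quadric (q : ℝ × ℝ × ℝ) : ℝ := 4 * a * q.2.2 + q.1 ^ 2 + q.2.1 ^ 2 + 2 * q.2.2 ^ 2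

theorem fderiv_field_apply (v : ℝ × ℝ × ℝ) :
    fderiv ℝ (field a b) p v =
      (a * v.1 + b * v.2.1 + p.1 * v.2.2 + p.2.2 * v.1,
       -b * v.1 + a * v.2.1 + p.2.1 * v.2.2 + p.2.2 * v.2.1,
       -2 * a * v.2.2 - 2 * p.1 * v.1 - 2 * p.2.1 * v.2.1 - 2 * p.2.2 * v.2.2) := by
  unfold field
  rw [DifferentiableAt.fderiv_prodMk (by fun_prop) (by fun_prop),
    DifferentiableAt.fderiv_prodMk (by fun_prop) (by fun_prop)]
  simp (disch := fun_prop) only [fderiv_fun_add, fderiv_const_mul, fderiv.fst, fderiv_fun_id,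
    ContinuousLinearMap.comp_id, fderiv.snd, fderiv_fun_mul, neg_mul, fderiv_fun_neg,
    fderiv_fun_sub, fderiv_fun_pow, Nat.add_one_sub_one, pow_one, nsmul_eq_mul, Nat.cast_ofNat,
    ContinuousLinearMap.prod_apply, add_apply, smul_apply, ContinuousLinearMap.coe_fst',
    smul_eq_mul, ContinuousLinearMap.comp_apply, ContinuousLinearMap.coe_snd', neg_apply,
    sub_apply, Prod.mk.injEq, and_true]
  constructor <;> ring

theorem fderiv_axialRotation_apply (v : ℝ × ℝ × ℝ) :
    fderiv ℝ axialRotation p v = axialRotation v := by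
  unfold axialRotation
  rw [DifferentiableAt.fderiv_prodMk (by fun_prop) (by fun_prop),
    DifferentiableAt.fderiv_prodMk (by fun_prop) (by fun_prop)]
  simp (disch := fun_prop) [fderiv.fst, fderiv.snd]

theorem lieBracket_field_axialRotation : lieBracket ℝ (field a b) axialRotation p = 0 := by
  simp only [lieBracket, fderiv_axialRotation_apply, fderiv_field_apply, field, axialRotation,
    Prod.mk_sub_mk, Prod.mk_eq_zero]
  refine ⟨by ring, by ring, by ring⟩

theorem fderiv_radiusSq_apply (v : ℝ × ℝ × ℝ) :
    fderiv ℝ radiusSq p v = 2 * p.1 * v.1 + 2 * p.2.1 * v.2.1 := by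
  unfold radiusSq
  simp (disch := fun_prop) [fderiv_fun_add, fderiv_fun_pow, fderiv.fst, fderiv.snd]

theorem fderiv_quadric_apply (v : ℝ × ℝ × ℝ) :
    fderiv ℝ (quadric a) p v =
      4 * a * v.2.2 + 2 * p.1 * v.1 + 2 * p.2.1 * v.2.1 + 4 * p.2.2 * v.2.2 := by
  unfold quadric
  simp (disch := fun_prop) only [fderiv_fun_add, fderiv_const_mul, fderiv_fun_pow, fderiv.fst,
    fderiv.snd, fderiv_fun_id, ContinuousLinearMap.comp_id, Nat.add_one_sub_one, pow_one,
    nsmul_eq_mul, Nat.cast_ofNat, add_apply, smul_apply, smul_eq_mul,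
    ContinuousLinearMap.comp_apply, ContinuousLinearMap.coe_fst', ContinuousLinearMap.coe_snd']
  ring

theorem fderiv_radiusSq_field :
    fderiv ℝ radiusSq p (field a b p) = 2 * (a + p.2.2) * radiusSq p := by
  rw [fderiv_radiusSq_apply, field, radiusSq]
  ring

theorem fderiv_quadric_field :
    fderiv ℝ (quadric a) p (field a b p) = -2 * (a + p.2.2) * quadric a p := by
  rw [fderiv_quadric_apply, field, quadric]
  ring

theorem fderiv_radiusSq_mul_quadric_field :
    fderiv ℝ (fun q => radiusSq q * quadric a q) p (field a b p) = 0 := by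
  rw [fderiv_fun_mul (by unfold radiusSq; fun_prop) (by unfold quadric; fun_prop)]
  simp only [add_apply, smul_apply, smul_eq_mul, fderiv_radiusSq_field, fderiv_quadric_field]
  ring

end Langford

open Langford

theorem stmt2 (a b : ℝ)
    (X Δ : ℝ × ℝ × ℝ → ℝ × ℝ × ℝ)
    (hX : X = fun p => (a*p.1 + b*p.2.1 + p.1*p.2.2,
                        -b*p.1 + a*p.2.1 + p.2.1*p.2.2,
                        -2*a*p.2.2 - p.1^2 - p.2.1^2 - p.2.2^2))
    (hΔ : Δ = fun p =>
      (-p.2.1*(p.1^2 + p.2.1^2)*(4*a*p.2.2 + p.1^2 + p.2.1^2 + 2*p.2.2^2),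
       p.1*(p.1^2 + p.2.1^2)*(4*a*p.2.2 + p.1^2 + p.2.1^2 + 2*p.2.2^2),
       0)) :
    ∀ p : ℝ × ℝ × ℝ, fderiv ℝ Δ p (X p) - fderiv ℝ X p (Δ p) = 0 := by
  intro p
  have hX_eq : X = field a b := hX
  have hΔ_eq : Δ = fun q => (radiusSq q * quadric a q) • axialRotation q := by
    subst hΔ
    ext q <;>
      simp only [radiusSq, quadric, axialRotation, Prod.smul_fst, Prod.smul_snd, smul_eq_mul] <;>
      ring
  change lieBracket ℝ X Δ p = 0
  rw [hX_eq, hΔ_eq, lieBracket_smul_right (by unfold radiusSq quadric; fun_prop)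
      (by unfold axialRotation; fun_prop),
    fderiv_radiusSq_mul_quadric_field, lieBracket_field_axialRotation,
    zero_smul, smul_zero, add_zero]
end

section
/- Let a,b,e be real numbers with a(a+e) < 0, and let α₁, α₃ : ℝ → ℝ be continuous. Define φ(t) = bt + ∫₀ᵗ (b·α₁(s) + α₃(s)) ds, x(t) = √(-a(a+e))·sin(φ(t)), y(t) = √(-a(a+e))·cos(φ(t)), z(t) = -a. Then for every α₂ : ℝ → ℝ continuous, (x,y,z) satisfies the system ẋ = (ax+by+xz)(1+α₁(t)) + x(a+z)α₂(t) + yα₃(t), ẏ = (-bx+ay+yz)(1+α₁(t)) + y(a+z)α₂(t) - xα₃(t), ż = (ez - x² - y² - z²)(1+α₁(t)+α₂(t)) for all t ∈ ℝ. -/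
/-! On the circle `x² + y² = -a(a+e)`, `z = -a` the factor `a + z` vanishes, so `α₂` drops out,
the `z`-equation reduces to `ż = 0`, and the planar equations become the rotation
`ẋ = y φ'`, `ẏ = -x φ'` with angular velocity `φ' = b(1 + α₁) + α₃`, which `φ` has by the
fundamental theorem of calculus. -/

open Real

theorem hasDerivAt_mul_add_integral {f : ℝ → ℝ} (hf : Continuous f) (b t : ℝ) :
    HasDerivAt (fun t => b * t + ∫ s in (0:ℝ)..t, f s) (b + f t) t := by
  exact (((hasDerivAt_id t).const_mul b).add (hf.integral_hasStrictDerivAt 0 t).hasDerivAt).congr_deriv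
    (by rw [mul_one])

theorem stmt4_general (a b e : ℝ) (h : a*(a+e) < 0)
    (α₁ α₂ α₃ : ℝ → ℝ)
    (hc1 : Continuous α₁) (hc3 : Continuous α₃)
    (φ x y z : ℝ → ℝ)
    (hφ : φ = fun t => b*t + ∫ s in (0:ℝ)..t, (b * α₁ s + α₃ s))
    (hx : x = fun t => Real.sqrt (-(a*(a+e))) * Real.sin (φ t))
    (hy : y = fun t => Real.sqrt (-(a*(a+e))) * Real.cos (φ t))
    (hz : z = fun _ => -a) :
    ∀ t : ℝ,
      HasDerivAt x ((a*x t + b*y t + x t * z t)*(1 + α₁ t)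
        + x t*(a + z t)*α₂ t + y t * α₃ t) t ∧
      HasDerivAt y ((-b*x t + a*y t + y t * z t)*(1 + α₁ t)
        + y t*(a + z t)*α₂ t - x t * α₃ t) t ∧
      HasDerivAt z ((e*z t - x t^2 - y t^2 - z t^2)*(1 + α₁ t + α₂ t)) t := by
  intro t
  set r := √(-(a*(a+e)))
  have hr : r ^ 2 = -(a*(a+e)) := sq_sqrt (neg_nonneg.2 h.le)
  have hφ' : HasDerivAt φ (b + (b * α₁ t + α₃ t)) t :=
    hφ ▸ hasDerivAt_mul_add_integral ((continuous_const.mul hc1).add hc3) b t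
  subst hx hy hz
  refine ⟨?_, ?_, ?_⟩
  · exact (hφ'.sin.const_mul r).congr_deriv (by ring)
  · exact (hφ'.cos.const_mul r).congr_deriv (by ring)
  · refine (hasDerivAt_const t (-a)).congr_deriv ?_
    linear_combination (1 + α₁ t + α₂ t) * (r ^ 2 * sin_sq_add_cos_sq (φ t) + hr)

theorem stmt4 (a b e : ℝ) (h : a*(a+e) < 0)
    (α₁ α₂ α₃ : ℝ → ℝ)
    (hc1 : Continuous α₁) (hc2 : Continuous α₂) (hc3 : Continuous α₃)
    (φ x y z : ℝ → ℝ)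
    (hφ : φ = fun t => b*t + ∫ s in (0:ℝ)..t, (b * α₁ s + α₃ s))
    (hx : x = fun t => Real.sqrt (-(a*(a+e))) * Real.sin (φ t))
    (hy : y = fun t => Real.sqrt (-(a*(a+e))) * Real.cos (φ t))
    (hz : z = fun _ => -a) :
    ∀ t : ℝ,
      HasDerivAt x ((a*x t + b*y t + x t * z t)*(1 + α₁ t)
        + x t*(a + z t)*α₂ t + y t * α₃ t) t ∧
      HasDerivAt y ((-b*x t + a*y t + y t * z t)*(1 + α₁ t)
        + y t*(a + z t)*α₂ t - x t * α₃ t) t ∧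
      HasDerivAt z ((e*z t - x t^2 - y t^2 - z t^2)*(1 + α₁ t + α₂ t)) t :=
  stmt4_general a b e h α₁ α₂ α₃ hc1 hc3 φ x y z hφ hx hy hz
end

section
/- Let a,b be real numbers and let α₁, α₃, α₄ : ℝ → ℝ be continuous. Define φ(t) = bt + ∫₀ᵗ (b·α₁(s) + α₃(s) + a⁴·α₄(s)) ds, x(t) = a·sin(φ(t)), y(t) = a·cos(φ(t)), z(t) = -a. Then for every continuous α₂ : ℝ → ℝ, (x,y,z) satisfies ẋ = (ax+by+xz)(1+α₁) + x(a+z)α₂ + yα₃ - y(x²+y²)(4az+x²+y²+2z²)α₄, ẏ = (-bx+ay+yz)(1+α₁) + y(a+z)α₂ - xα₃ + x(x²+y²)(4az+x²+y²+2z²)α₄, ż = -(2az+x²+y²+z²)(1+α₁+α₂) for all t ∈ ℝ. -/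
/-! On the circle `x² + y² = a²`, `z = -a` the generalized Langford field reduces to the rotation
`(ẋ, ẏ, ż) = ω · (y, -x, 0)` with angular velocity `ω = b (1 + α₁) + α₃ + a⁴ α₄`: the terms with
`a + z` vanish, `x² + y² + 2az + z² = 0`, and `4az + x² + y² + 2z² = -a²`. The curve
`(a sin φ, a cos φ, -a)` solves this rotation exactly when `φ' = ω`, which is how `φ` is defined. -/

open Real

theorem hasDerivAt_const_mul_sin_comp {φ : ℝ → ℝ} {ω t : ℝ} (hφ : HasDerivAt φ ω t) (a : ℝ) :
    HasDerivAt (fun t => a * sin (φ t)) (a * cos (φ t) * ω) t := by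
  simpa only [mul_assoc] using hφ.sin.const_mul a

theorem hasDerivAt_const_mul_cos_comp {φ : ℝ → ℝ} {ω t : ℝ} (hφ : HasDerivAt φ ω t) (a : ℝ) :
    HasDerivAt (fun t => a * cos (φ t)) (-(a * sin (φ t)) * ω) t := by
  simpa only [neg_mul, mul_neg, mul_assoc, mul_comm ω] using hφ.cos.const_mul a

section LangfordOnCircle

variable {a x y : ℝ} (b α₁ α₂ α₃ α₄ : ℝ)

theorem langford_fieldX_on_circle (h : x ^ 2 + y ^ 2 = a ^ 2) :
    (a*x + b*y + x*(-a))*(1 + α₁) + x*(a + -a)*α₂ + y*α₃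
      - y*(x^2 + y^2)*(4*a*(-a) + x^2 + y^2 + 2*(-a)^2)*α₄
      = y * (b * (1 + α₁) + α₃ + a ^ 4 * α₄) := by
  linear_combination (-y * α₄ * (x ^ 2 + y ^ 2 - a ^ 2)) * h

theorem langford_fieldY_on_circle (h : x ^ 2 + y ^ 2 = a ^ 2) :
    (-b*x + a*y + y*(-a))*(1 + α₁) + y*(a + -a)*α₂ - x*α₃
      + x*(x^2 + y^2)*(4*a*(-a) + x^2 + y^2 + 2*(-a)^2)*α₄
      = -x * (b * (1 + α₁) + α₃ + a ^ 4 * α₄) := by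
  linear_combination (x * α₄ * (x ^ 2 + y ^ 2 - a ^ 2)) * h

theorem langford_fieldZ_on_circle (h : x ^ 2 + y ^ 2 = a ^ 2) :
    -(2*a*(-a) + x^2 + y^2 + (-a)^2)*(1 + α₁ + α₂) = 0 := by
  linear_combination (-(1 + α₁ + α₂)) * h

end LangfordOnCircle

theorem stmt5_general (a b : ℝ)
    (α₁ α₂ α₃ α₄ : ℝ → ℝ)
    (hc1 : Continuous α₁) (hc3 : Continuous α₃)
    (hc4 : Continuous α₄)
    (φ x y z : ℝ → ℝ)
    (hφ : φ = fun t => b*t + ∫ s in (0:ℝ)..t, (b * α₁ s + α₃ s + a^4 * α₄ s))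
    (hx : x = fun t => a * Real.sin (φ t))
    (hy : y = fun t => a * Real.cos (φ t))
    (hz : z = fun _ => -a) :
    ∀ t : ℝ,
      HasDerivAt x ((a*x t + b*y t + x t * z t)*(1 + α₁ t)
        + x t*(a + z t)*α₂ t + y t * α₃ t
        - y t*(x t^2 + y t^2)*(4*a*z t + x t^2 + y t^2 + 2*z t^2)*α₄ t) t ∧
      HasDerivAt y ((-b*x t + a*y t + y t * z t)*(1 + α₁ t)
        + y t*(a + z t)*α₂ t - x t * α₃ t
        + x t*(x t^2 + y t^2)*(4*a*z t + x t^2 + y t^2 + 2*z t^2)*α₄ t) t ∧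
      HasDerivAt z (-(2*a*z t + x t^2 + y t^2 + z t^2)*(1 + α₁ t + α₂ t)) t := by
  intro t
  subst hx hy hz
  have hφ' : HasDerivAt φ (b * (1 + α₁ t) + α₃ t + a ^ 4 * α₄ t) t := by
    have hcont : Continuous fun s => b * α₁ s + α₃ s + a ^ 4 * α₄ s := by fun_prop
    have := hasDerivAt_mul_add_integral hcont b t
    rw [← hφ] at this
    exact this.congr_deriv (by ring)
  have hcircle : (a * sin (φ t)) ^ 2 + (a * cos (φ t)) ^ 2 = a ^ 2 := by
    linear_combination a ^ 2 * sin_sq_add_cos_sq (φ t)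
  refine ⟨?_, ?_, ?_⟩
  · rw [langford_fieldX_on_circle (h := hcircle)]
    exact hasDerivAt_const_mul_sin_comp hφ' a
  · rw [langford_fieldY_on_circle (h := hcircle)]
    exact hasDerivAt_const_mul_cos_comp hφ' a
  · rw [langford_fieldZ_on_circle (h := hcircle)]
    exact hasDerivAt_const t (-a)

theorem stmt5 (a b : ℝ)
    (α₁ α₂ α₃ α₄ : ℝ → ℝ)
    (hc1 : Continuous α₁) (hc2 : Continuous α₂) (hc3 : Continuous α₃)
    (hc4 : Continuous α₄)
    (φ x y z : ℝ → ℝ)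
    (hφ : φ = fun t => b*t + ∫ s in (0:ℝ)..t, (b * α₁ s + α₃ s + a^4 * α₄ s))
    (hx : x = fun t => a * Real.sin (φ t))
    (hy : y = fun t => a * Real.cos (φ t))
    (hz : z = fun _ => -a) :
    ∀ t : ℝ,
      HasDerivAt x ((a*x t + b*y t + x t * z t)*(1 + α₁ t)
        + x t*(a + z t)*α₂ t + y t * α₃ t
        - y t*(x t^2 + y t^2)*(4*a*z t + x t^2 + y t^2 + 2*z t^2)*α₄ t) t ∧
      HasDerivAt y ((-b*x t + a*y t + y t * z t)*(1 + α₁ t)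
        + y t*(a + z t)*α₂ t - x t * α₃ t
        + x t*(x t^2 + y t^2)*(4*a*z t + x t^2 + y t^2 + 2*z t^2)*α₄ t) t ∧
      HasDerivAt z (-(2*a*z t + x t^2 + y t^2 + z t^2)*(1 + α₁ t + α₂ t)) t :=
  stmt5_general a b α₁ α₂ α₃ α₄ hc1 hc3 hc4 φ x y z hφ hx hy hz
end

section
/- Let a, b, e ∈ ℝ with e = 0, and let α₁, α₂, α₃ : ℝ → ℝ be continuous functions with α₁(t) + α₂(t) ≥ l > -1 for all t ≥ 0, for some constant l. Then along any solution (x(t), y(t), z(t)) of the system ẋ = (ax+by+xz)(1+α₁) + x(a+z)α₂ + yα₃, ẏ = (-bx+ay+yz)(1+α₁) + y(a+z)α₂ - xα₃, ż = (-x²-y²-z²)(1+α₁+α₂), the function V(t) = -z(t)³ satisfies V̇(t) ≥ 3(1+l)·z(t)²·(x(t)² + y(t)² + z(t)²) ≥ 0 for all t ≥ 0. -/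
/-! Along the flow `-z³` has derivative `3 z² (x² + y² + z²) (1 + α₁ + α₂)`,
and for `t ≥ 0` the last factor is at least `1 + l > 0`. -/

lemma hasDerivAt_neg_pow_three {f : ℝ → ℝ} {f' t : ℝ} (hf : HasDerivAt f f' t) :
    HasDerivAt (fun s => -(f s) ^ 3) (-(3 * f t ^ 2 * f')) t := by
  simpa using (hf.fun_pow 3).fun_neg

theorem stmt6_general (l : ℝ)
    (α₁ α₂ : ℝ → ℝ)
    (hl : -1 < l) (hlb : ∀ t : ℝ, 0 ≤ t → l ≤ α₁ t + α₂ t)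
    (x y z : ℝ → ℝ)
    (hz : ∀ t, HasDerivAt z ((-x t^2 - y t^2 - z t^2)*(1 + α₁ t + α₂ t)) t) :
    ∀ t : ℝ, 0 ≤ t →
      3*(1+l)*z t^2*(x t^2 + y t^2 + z t^2) ≤ deriv (fun s => -(z s)^3) t ∧
      0 ≤ 3*(1+l)*z t^2*(x t^2 + y t^2 + z t^2) := by
  intro t ht
  set q := 3 * z t ^ 2 * (x t ^ 2 + y t ^ 2 + z t ^ 2)
  have hq : 0 ≤ q := by positivity
  have hderiv : deriv (fun s => -(z s) ^ 3) t = (1 + α₁ t + α₂ t) * q := by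
    rw [(hasDerivAt_neg_pow_three (hz t)).deriv]
    ring
  have hlower : 1 + l ≤ 1 + α₁ t + α₂ t := by linarith [hlb t ht]
  constructor
  · calc 3 * (1 + l) * z t ^ 2 * (x t ^ 2 + y t ^ 2 + z t ^ 2) = (1 + l) * q := by ring
      _ ≤ (1 + α₁ t + α₂ t) * q := mul_le_mul_of_nonneg_right hlower hq
      _ = deriv (fun s => -(z s) ^ 3) t := hderiv.symm
  · calc (0 : ℝ) ≤ (1 + l) * q := mul_nonneg (by linarith) hq
      _ = 3 * (1 + l) * z t ^ 2 * (x t ^ 2 + y t ^ 2 + z t ^ 2) := by ring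

theorem stmt6 (a b e l : ℝ) (he : e = 0)
    (α₁ α₂ α₃ : ℝ → ℝ)
    (hc1 : Continuous α₁) (hc2 : Continuous α₂) (hc3 : Continuous α₃)
    (hl : -1 < l) (hlb : ∀ t : ℝ, 0 ≤ t → l ≤ α₁ t + α₂ t)
    (x y z : ℝ → ℝ)
    (hx : ∀ t, HasDerivAt x ((a*x t + b*y t + x t * z t)*(1 + α₁ t)
        + x t*(a + z t)*α₂ t + y t * α₃ t) t)
    (hy : ∀ t, HasDerivAt y ((-b*x t + a*y t + y t * z t)*(1 + α₁ t)
        + y t*(a + z t)*α₂ t - x t * α₃ t) t)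
    (hz : ∀ t, HasDerivAt z ((-x t^2 - y t^2 - z t^2)*(1 + α₁ t + α₂ t)) t) :
    ∀ t : ℝ, 0 ≤ t →
      3*(1+l)*z t^2*(x t^2 + y t^2 + z t^2) ≤ deriv (fun s => -(z s)^3) t ∧
      0 ≤ 3*(1+l)*z t^2*(x t^2 + y t^2 + z t^2) :=
  stmt6_general l α₁ α₂ hl hlb x y z hz
end

section
/- Let a,b,e ∈ ℝ with a(a+e) < 0 and b ≠ 0, and let α₁, α₃ : ℝ → ℝ be continuous such that f(t) = b·α₁(t) + α₃(t) is (2π/|b|)-periodic with ∫₀^{2π/b} f(s) ds = 0. Then the functions x(t) = √(-a(a+e))·sin(bt + ∫₀ᵗ f(s) ds), y(t) = √(-a(a+e))·cos(bt + ∫₀ᵗ f(s) ds), z(t) = -a are (2π/|b|)-periodic. -/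
set_option maxHeartbeats 1000000

theorem stmt11 (a b e : ℝ) (h : a*(a+e) < 0) (hb : b ≠ 0)
    (α₁ α₃ : ℝ → ℝ) (hc1 : Continuous α₁) (hc3 : Continuous α₃)
    (f : ℝ → ℝ) (hf : f = fun t => b * α₁ t + α₃ t)
    (hper : Function.Periodic f (2*Real.pi/|b|))
    (hint : (∫ s in (0:ℝ)..(2*Real.pi/b), f s) = 0)
    (x y z : ℝ → ℝ)
    (hx : x = fun t => Real.sqrt (-(a*(a+e))) * Real.sin (b*t + ∫ s in (0:ℝ)..t, f s))
    (hy : y = fun t => Real.sqrt (-(a*(a+e))) * Real.cos (b*t + ∫ s in (0:ℝ)..t, f s))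
    (hz : z = fun _ => -a) :
    Function.Periodic x (2*Real.pi/|b|) ∧ Function.Periodic y (2*Real.pi/|b|) ∧
    Function.Periodic z (2*Real.pi/|b|) := by
  have hcf : Continuous f := by rw [hf]; fun_prop
  have hintT : (∫ s in (0:ℝ)..(2*Real.pi/|b|), f s) = 0 := by
    rcases abs_choice b with hab | hab
    · rwa [hab]
    · have hnT : -(2*Real.pi/|b|) = 2*Real.pi/b := by rw [hab, div_neg, neg_neg]
      have h3 : (∫ s in (-(2*Real.pi/|b|))..0, f s)
          = ∫ s in (0:ℝ)..(2*Real.pi/|b|), f s := by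
        have := hper.intervalIntegral_add_eq (-(2*Real.pi/|b|)) 0
        simpa using this
      rw [hnT] at h3
      rw [← h3, intervalIntegral.integral_symm, hint, neg_zero]
  have key : ∀ t : ℝ, (∫ s in (0:ℝ)..(t+2*Real.pi/|b|), f s) = ∫ s in (0:ℝ)..t, f s := by
    intro t
    have hi : ∀ u v : ℝ, IntervalIntegrable f MeasureTheory.volume u v :=
      fun u v => hcf.intervalIntegrable u v
    have h4 : (∫ s in (0:ℝ)..(t+2*Real.pi/|b|), f s)
        = (∫ s in (0:ℝ)..t, f s) + ∫ s in t..(t+2*Real.pi/|b|), f s :=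
      (intervalIntegral.integral_add_adjacent_intervals (hi 0 t) (hi t _)).symm
    rw [h4, hper.intervalIntegral_add_eq t 0]
    simp only [zero_add, hintT, add_zero]
  have hbT : b * (2*Real.pi/|b|) = 2*Real.pi ∨ b * (2*Real.pi/|b|) = -(2*Real.pi) := by
    rcases abs_choice b with hab | hab
    · left; rw [hab]; field_simp
    · right; rw [hab, div_neg, mul_neg, ← mul_div_assoc, mul_div_cancel_left₀ _ hb]
  have harg : ∀ t : ℝ, b*(t+2*Real.pi/|b|) + (∫ s in (0:ℝ)..(t+2*Real.pi/|b|), f s)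
      = (b*t + ∫ s in (0:ℝ)..t, f s) + b*(2*Real.pi/|b|) := by
    intro t; rw [key t]; ring
  have hsin : ∀ θ : ℝ, Real.sin (θ + b*(2*Real.pi/|b|)) = Real.sin θ := by
    intro θ
    rcases hbT with h1 | h1 <;> rw [h1]
    · exact Real.sin_add_two_pi θ
    · rw [← sub_eq_add_neg, Real.sin_sub_two_pi]
  have hcos : ∀ θ : ℝ, Real.cos (θ + b*(2*Real.pi/|b|)) = Real.cos θ := by
    intro θ
    rcases hbT with h1 | h1 <;> rw [h1]
    · exact Real.cos_add_two_pi θ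
    · rw [← sub_eq_add_neg, Real.cos_sub_two_pi]
  refine ⟨?_, ?_, ?_⟩
  · intro t; rw [hx]; simp only; rw [harg t, hsin]
  · intro t; rw [hy]; simp only; rw [harg t, hcos]
  · intro t; rw [hz]
end

section
/- Let a,b,c,d,e ∈ ℝ with d = a, c = -b and a(a+e) < 0. Then x(t) = √(-a(a+e))·sin(bt), y(t) = √(-a(a+e))·cos(bt), z(t) = -a is a solution of the system ẋ = ax + by + xz, ẏ = cx + dy + yz, ż = ez - (x² + y² + z²), and it satisfies x(t)² + y(t)² = -a(a+e) for all t. -/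
theorem stmt14 (a b c d e : ℝ) (hd : d = a) (hc : c = -b) (h : a*(a+e) < 0)
    (x y z : ℝ → ℝ)
    (hx : x = fun t => Real.sqrt (-(a*(a+e))) * Real.sin (b*t))
    (hy : y = fun t => Real.sqrt (-(a*(a+e))) * Real.cos (b*t))
    (hz : z = fun _ => -a) :
    (∀ t : ℝ,
      HasDerivAt x (a*x t + b*y t + x t * z t) t ∧
      HasDerivAt y (c*x t + d*y t + y t * z t) t ∧
      HasDerivAt z (e*z t - (x t^2 + y t^2 + z t^2)) t) ∧
    ∀ t : ℝ, x t^2 + y t^2 = -(a*(a+e)) := by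
  set r := Real.sqrt (-(a*(a+e))) with hr
  have hr2 : r^2 = -(a*(a+e)) := Real.sq_sqrt (by linarith)
  subst hx hy hz
  rw [hd, hc]
  constructor
  · intro t
    refine ⟨?_, ?_, ?_⟩
    · have h1 : HasDerivAt (fun t => r * Real.sin (b*t)) (r * (Real.cos (b*t) * b)) t :=
        ((Real.hasDerivAt_sin (b*t)).comp t (by simpa using (hasDerivAt_id t).const_mul b)).const_mul r
      convert h1 using 1; ring
    · have h1 : HasDerivAt (fun t => r * Real.cos (b*t)) (r * (-Real.sin (b*t) * b)) t :=
        ((Real.hasDerivAt_cos (b*t)).comp t (by simpa using (hasDerivAt_id t).const_mul b)).const_mul r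
      convert h1 using 1; ring
    · have h1 : HasDerivAt (fun _ : ℝ => -a) 0 t := hasDerivAt_const t (-a)
      convert h1 using 1
      have hs : (r * Real.sin (b*t))^2 + (r * Real.cos (b*t))^2 = r^2 := by
        have := Real.sin_sq_add_cos_sq (b*t); nlinarith
      simp only []
      nlinarith
  · intro t
    have hs : Real.sin (b*t)^2 + Real.cos (b*t)^2 = 1 := Real.sin_sq_add_cos_sq (b*t)
    simp only []
    nlinarith
end
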